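/- Let α > 0 be real, let m ∈ ℕ, and let n be an integer with n > α + m. Define Ĉ_{n,β} := 2^β Γ(β+1) ((2n+1)/π) Γ(n−β)/Γ(n+β+2). Then Σ_{i=0}^{m−1} Ĉ_{n,α+i} / Ĉ_{n,α} = 1 + Σ_{i=1}^{m−1} ∏_{r=1}^{i} 2(α+r)/((n−α−r)(n+α+r+1)) ≤ Σ_{i=0}^{m−1} (2(α+m−1)/(n+α+m))^i < (n+α+m)/(n−α−m+2). -/

import Mathlib

/-- `Ĉ_{n,β} = 2^β Γ(β+1) ((2n+1)/π) Γ(n−β)/Γ(n+β+2)`. -/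
noncomputable def Chat (n : ℕ) (β : ℝ) : ℝ :=
  (2 : ℝ) ^ β * Real.Gamma (β + 1) * ((2 * (n : ℝ) + 1) / Real.pi) *
    (Real.Gamma ((n : ℝ) - β) / Real.Gamma ((n : ℝ) + β + 2))


lemma chat_succ (n : ℕ) (β : ℝ) (hβ : 0 < β) (h : β + 1 < (n : ℝ)) :
    Chat n (β + 1) = Chat n β * (2 * (β + 1) / (((n : ℝ) - β - 1) * ((n : ℝ) + β + 2))) := by
  unfold Chat
  have hd1 : (0:ℝ) < (n:ℝ) - β - 1 := by linarith
  have hd2 : (0:ℝ) < (n:ℝ) + β + 2 := by linarith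
  have h1 : Real.Gamma (β + 1 + 1) = (β + 1) * Real.Gamma (β + 1) :=
    Real.Gamma_add_one (by linarith)
  have h2 : Real.Gamma ((n:ℝ) - β) = ((n:ℝ) - β - 1) * Real.Gamma ((n:ℝ) - β - 1) := by
    have := Real.Gamma_add_one hd1.ne' (s := (n:ℝ) - β - 1)
    rw [show (n:ℝ) - β - 1 + 1 = (n:ℝ) - β by ring] at this
    exact this
  have h3 : Real.Gamma ((n:ℝ) + (β + 1) + 2) = ((n:ℝ) + β + 2) * Real.Gamma ((n:ℝ) + β + 2) := by
    have := Real.Gamma_add_one hd2.ne' (s := (n:ℝ) + β + 2)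
    rw [show (n:ℝ) + β + 2 + 1 = (n:ℝ) + (β + 1) + 2 by ring] at this
    exact this
  have h4 : (2:ℝ) ^ (β + 1) = 2 ^ β * 2 := by
    rw [Real.rpow_add (by norm_num), Real.rpow_one]
  have h5 : (n:ℝ) - (β + 1) = (n:ℝ) - β - 1 := by ring
  have hG : Real.Gamma ((n:ℝ) + β + 2) ≠ 0 := (Real.Gamma_pos_of_pos hd2).ne'
  rw [h5, h3, h4, h1, h2]
  have hpi : Real.pi ≠ 0 := Real.pi_ne_zero
  field_simp

lemma chat_pos (n : ℕ) (β : ℝ) (hβ : 0 < β) (h : β < (n : ℝ)) : 0 < Chat n β := by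
  unfold Chat
  have g1 : 0 < Real.Gamma (β + 1) := Real.Gamma_pos_of_pos (by linarith)
  have g2 : 0 < Real.Gamma ((n:ℝ) - β) := Real.Gamma_pos_of_pos (by linarith)
  have g3 : 0 < Real.Gamma ((n:ℝ) + β + 2) := Real.Gamma_pos_of_pos (by linarith)
  have : (0:ℝ) < Real.pi := Real.pi_pos
  positivity

lemma chat_prod (n : ℕ) (α : ℝ) (hα : 0 < α) (i : ℕ) (h : α + (i : ℝ) < (n : ℝ)) :
    Chat n (α + (i : ℝ)) = Chat n α * ∏ r ∈ Finset.Icc 1 i,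
      (2 * (α + (r : ℝ)) / (((n : ℝ) - α - (r : ℝ)) * ((n : ℝ) + α + (r : ℝ) + 1))) := by
  induction i with
  | zero => simp
  | succ i ih =>
    have hi : α + (i : ℝ) < (n : ℝ) := by push_cast at h ⊢; linarith
    have hrec := chat_succ n (α + (i : ℝ)) (by positivity) (by push_cast at h ⊢; linarith)
    rw [Finset.prod_Icc_succ_top (Nat.one_le_iff_ne_zero.mpr (Nat.succ_ne_zero i))]
    have hI : α + ((i + 1 : ℕ) : ℝ) = α + (i : ℝ) + 1 := by push_cast; ring
    rw [hI, hrec, ih hi]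
    push_cast
    ring

/-- identity and bounds for `Σ_{i=0}^{m−1} Ĉ_{n,α+i}/Ĉ_{n,α}`. -/
theorem stmt_3 (α : ℝ) (hα : 0 < α) (m : ℕ) (hm : 1 ≤ m) (n : ℕ)
    (hn : α + (m : ℝ) < (n : ℝ)) :
    (∑ i ∈ Finset.range m, Chat n (α + (i : ℝ)) / Chat n α =
        1 + ∑ i ∈ Finset.Icc 1 (m - 1), ∏ r ∈ Finset.Icc 1 i,
          2 * (α + (r : ℝ)) / (((n : ℝ) - α - (r : ℝ)) * ((n : ℝ) + α + (r : ℝ) + 1))) ∧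
    (∑ i ∈ Finset.range m, Chat n (α + (i : ℝ)) / Chat n α ≤
        ∑ i ∈ Finset.range m, (2 * (α + (m : ℝ) - 1) / ((n : ℝ) + α + (m : ℝ))) ^ i) ∧
    (∑ i ∈ Finset.range m, (2 * (α + (m : ℝ) - 1) / ((n : ℝ) + α + (m : ℝ))) ^ i <
        ((n : ℝ) + α + (m : ℝ)) / ((n : ℝ) - α - (m : ℝ) + 2)) := by

  have hm1 : (1 : ℝ) ≤ (m : ℝ) := by exact_mod_cast hm
  have hC : 0 < Chat n α := chat_pos n α hα (by linarith)
  have key : ∀ i ∈ Finset.range m, Chat n (α + (i : ℝ)) / Chat n α =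
      ∏ r ∈ Finset.Icc 1 i,
        (2 * (α + (r : ℝ)) / (((n : ℝ) - α - (r : ℝ)) * ((n : ℝ) + α + (r : ℝ) + 1))) := by
    intro i hi
    have hi' : (i : ℝ) + 1 ≤ (m : ℝ) := by
      exact_mod_cast Nat.succ_le_of_lt (Finset.mem_range.mp hi)
    rw [chat_prod n α hα i (by linarith), mul_comm, mul_div_assoc, div_self hC.ne', mul_one]
  set q : ℝ := 2 * (α + (m : ℝ) - 1) / ((n : ℝ) + α + (m : ℝ)) with hq
  have hden : (0:ℝ) < (n : ℝ) + α + (m : ℝ) := by linarith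
  have hq0 : 0 < q := by
    apply div_pos (by linarith) hden
  have hq1 : q < 1 := by
    rw [hq, div_lt_one hden]; linarith
  refine ⟨?_, ?_, ?_⟩
  · rw [Finset.sum_congr rfl key]
    obtain ⟨k, rfl⟩ : ∃ k, m = k + 1 := ⟨m - 1, (Nat.succ_pred_eq_of_pos hm).symm⟩
    have hset : Finset.range (k + 1) = insert 0 (Finset.Icc 1 k) := by
      ext x; simp only [Finset.mem_range, Finset.mem_insert, Finset.mem_Icc]; omega
    rw [hset, Finset.sum_insert (by simp)]
    simp
  · apply Finset.sum_le_sum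
    intro i hi
    rw [key i hi]
    have hcard : (Finset.Icc 1 i).card = i := by simp
    have hbound : ∀ r ∈ Finset.Icc 1 i,
        2 * (α + (r : ℝ)) / (((n : ℝ) - α - (r : ℝ)) * ((n : ℝ) + α + (r : ℝ) + 1)) ≤ q := by
      intro r hr
      obtain ⟨hr1, hr2⟩ := Finset.mem_Icc.mp hr
      have hrm : (r : ℝ) + 1 ≤ (m : ℝ) := by
        exact_mod_cast Nat.succ_le_of_lt (lt_of_le_of_lt hr2 (Finset.mem_range.mp hi))
      have hr1' : (1 : ℝ) ≤ (r : ℝ) := by exact_mod_cast hr1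
      have hd1 : (0:ℝ) < (n : ℝ) - α - (r : ℝ) := by linarith
      have hd2 : (0:ℝ) < (n : ℝ) + α + (r : ℝ) + 1 := by linarith
      rw [hq, div_le_div_iff₀ (by positivity) hden]
      have hds : (n : ℝ) + α + (m : ℝ) ≤ ((n : ℝ) - α - (r : ℝ)) * ((n : ℝ) + α + (r : ℝ) + 1) := by
        nlinarith [mul_nonneg (by linarith : (0:ℝ) ≤ (m : ℝ) - (r : ℝ) - 1)
          (by linarith : (0:ℝ) ≤ (n : ℝ) + α + (r : ℝ)),
          mul_pos (by linarith : (0:ℝ) < (n : ℝ) - α - (m : ℝ)) hd2]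
      nlinarith [mul_nonneg (by linarith : (0:ℝ) ≤ (m : ℝ) - 1 - (r : ℝ)) hden.le,
        mul_nonneg (by linarith : (0:ℝ) ≤ 2 * (α + (m : ℝ) - 1)) (by linarith [hds] : (0:ℝ) ≤
          ((n : ℝ) - α - (r : ℝ)) * ((n : ℝ) + α + (r : ℝ) + 1) - ((n : ℝ) + α + (m : ℝ)))]
    calc ∏ r ∈ Finset.Icc 1 i,
        (2 * (α + (r : ℝ)) / (((n : ℝ) - α - (r : ℝ)) * ((n : ℝ) + α + (r : ℝ) + 1)))
        ≤ ∏ _r ∈ Finset.Icc 1 i, q := by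
          apply Finset.prod_le_prod
          · intro r hr
            obtain ⟨hr1, hr2⟩ := Finset.mem_Icc.mp hr
            have hrm : (r : ℝ) + 1 ≤ (m : ℝ) := by
              exact_mod_cast Nat.succ_le_of_lt (lt_of_le_of_lt hr2 (Finset.mem_range.mp hi))
            have hd1 : (0:ℝ) < (n : ℝ) - α - (r : ℝ) := by linarith
            have hd2 : (0:ℝ) < (n : ℝ) + α + (r : ℝ) + 1 := by linarith
            positivity
          · exact hbound
      _ = q ^ i := by rw [Finset.prod_const, hcard]
  · have hne : (0:ℝ) < 1 - q := by linarith
    have hsum : ∑ i ∈ Finset.range m, q ^ i = (1 - q ^ m) / (1 - q) := by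
      rw [geom_sum_eq hq1.ne m]
      rw [div_eq_div_iff (by linarith [hq1] : q - 1 ≠ 0) hne.ne']
      ring
    rw [hsum]
    have h1q : 1 - q = ((n : ℝ) - α - (m : ℝ) + 2) / ((n : ℝ) + α + (m : ℝ)) := by
      rw [hq]; field_simp; ring
    calc (1 - q ^ m) / (1 - q) < 1 / (1 - q) := by
          gcongr
          all_goals first | exact hne | nlinarith [pow_pos hq0 m]
      _ = ((n : ℝ) + α + (m : ℝ)) / ((n : ℝ) - α - (m : ℝ) + 2) := by
          rw [h1q, one_div_div]
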